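/- If (G, 𝒫) is relatively hyperbolic, then C(G, 𝒫) < ∞; that is, there is a finite uniform bound on the cardinalities of all subgroups of G that are either finite non-parabolic or contained in the intersection of two distinct maximal parabolic subgroups. -/

import Mathlib

/-
Common definitions for formalizing "Connectedness of Bowditch Boundary of Dehn Fillings"
(Dasgupta).  We set up: Gromov hyperbolic graphs (four--point condition on the graph
metric), the Groves--Manning combinatorial cusped space, relative hyperbolicity of a
group pair, the Gromov (Bowditch) boundary of the cusped space, parabolic / two-ended /
elementary subgroups, actions on simplicial trees and splittings (relative to a
peripheral collection), acylindricity, peripheral splittings, the constant C(G,𝓟),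
almost malnormality, ends of groups, Dehn fillings and "sufficiently long" fillings,
and actions on ℝ-trees.
-/

open scoped Pointwise

universe u

noncomputable section

namespace RelHypDehn

/-! ### Gromov hyperbolicity of graphs -/

/-- The Gromov product of `x` and `y` at `w`, with respect to the combinatorial
(graph) metric of `X`. -/
def gromovProd {V : Type*} (X : SimpleGraph V) (x y w : V) : ℝ :=
  ((X.dist x w : ℝ) + (X.dist y w : ℝ) - (X.dist x y : ℝ)) / 2

/-- A graph is Gromov hyperbolic if its graph metric satisfies the four-point
condition for some δ ≥ 0. -/
def IsHyperbolicGraph {V : Type*} (X : SimpleGraph V) : Prop :=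
  ∃ δ : ℝ, 0 ≤ δ ∧ ∀ x y z w : V,
    min (gromovProd X x z w) (gromovProd X z y w) - δ ≤ gromovProd X x y w

/-! ### The cusped space of a group pair -/

/-- The ball of radius `k` in the word metric determined by the (symmetrized)
generating set `T`. -/
def wordBall {G : Type u} [Group G] (T : Set G) (k : ℕ) : Set G :=
  {g | ∃ l : List G, l.length ≤ k ∧ (∀ a ∈ l, a ∈ T ∨ a⁻¹ ∈ T) ∧ l.prod = g}

variable {G : Type u} [Group G]

/-- Vertices of the cusped space: the vertices of the Cayley graph of `G`, together
with, for each `P ∈ 𝓟`, each `x ∈ G` and each depth `n` (representing depth `n+1`),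
a vertex `(P, x, n)` of the combinatorial horoball over the coset `x P`. -/
abbrev CuspedVertex (G : Type u) [Group G] (𝓟 : Set (Subgroup G)) : Type u :=
  G ⊕ (𝓟 × G × ℕ)

/-- Adjacency in the Groves–Manning cusped space: Cayley edges, vertical horoball
edges, edges joining depth-one horoball vertices to the Cayley graph, and horizontal
horoball edges at depth `n+1` joining coset elements at distance at most `2^(n+1)`
in the word metric of the peripheral subgroup. -/
def cuspedRel (𝓟 : Set (Subgroup G)) (S : Set G) :
    CuspedVertex G 𝓟 → CuspedVertex G 𝓟 → Prop
  | Sum.inl x, Sum.inl y => x⁻¹ * y ∈ S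
  | Sum.inl x, Sum.inr ⟨_, y, n⟩ => x = y ∧ n = 0
  | Sum.inr ⟨_, x, n⟩, Sum.inl y => x = y ∧ n = 0
  | Sum.inr ⟨P, x, n⟩, Sum.inr ⟨Q, y, m⟩ =>
      P = Q ∧ ((x = y ∧ m = n + 1) ∨
        (n = m ∧ x⁻¹ * y ∈ wordBall (S ∩ (P.1 : Set G)) (2 ^ (n + 1))))

/-- The cusped space of the pair `(G, 𝓟)` with respect to the generating set `S`. -/
def cuspedGraph (𝓟 : Set (Subgroup G)) (S : Set G) : SimpleGraph (CuspedVertex G 𝓟) :=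
  SimpleGraph.fromRel (cuspedRel 𝓟 S)

/-- `S` is a finite generating set of `G` adapted to `𝓟`: it generates `G` and
`S ∩ P` generates `P` for each `P ∈ 𝓟`. -/
def Adapted (G : Type u) [Group G] (𝓟 : Set (Subgroup G)) (S : Finset G) : Prop :=
  Subgroup.closure (S : Set G) = ⊤ ∧
    ∀ P ∈ 𝓟, Subgroup.closure ((S : Set G) ∩ (P : Set G)) = P

/-- The pair `(G, 𝓟)` is relatively hyperbolic: `𝓟` is a finite collection of proper
subgroups, and for some adapted finite generating set the cusped space is Gromov
hyperbolic. -/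
def IsRelHyp (G : Type u) [Group G] (𝓟 : Set (Subgroup G)) : Prop :=
  𝓟.Finite ∧ (∀ P ∈ 𝓟, P ≠ ⊤) ∧
    ∃ S : Finset G, Adapted G 𝓟 S ∧ IsHyperbolicGraph (cuspedGraph 𝓟 (S : Set G))

/-! ### Gromov boundary of a hyperbolic graph -/

/-- A sequence converges at infinity if its Gromov products (at the basepoint `o`)
go to infinity. -/
def ConvergesAtInfinity {V : Type*} (X : SimpleGraph V) (o : V) (s : ℕ → V) : Prop :=
  ∀ M : ℝ, ∃ N : ℕ, ∀ m ≥ N, ∀ n ≥ N, M ≤ gromovProd X (s m) (s n) o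

/-- Two sequences converging at infinity are identified if their mutual Gromov
products go to infinity. -/
def seqRel {V : Type*} (X : SimpleGraph V) (o : V)
    (s t : {s : ℕ → V // ConvergesAtInfinity X o s}) : Prop :=
  ∀ M : ℝ, ∃ N : ℕ, ∀ m ≥ N, ∀ n ≥ N, M ≤ gromovProd X (s.1 m) (t.1 n) o

/-- The Gromov boundary of the graph `X` (for the cusped space of a relatively
hyperbolic pair this is the Bowditch boundary). -/
def GromovBoundary {V : Type*} (X : SimpleGraph V) (o : V) : Type _ :=
  Quot (seqRel X o)

/-- Extension of the Gromov product to the boundary. -/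
def boundaryProd {V : Type*} (X : SimpleGraph V) (o : V)
    (ξ η : GromovBoundary X o) : EReal :=
  ⨅ (s : {s : {s : ℕ → V // ConvergesAtInfinity X o s} // Quot.mk (seqRel X o) s = ξ})
    (t : {t : {t : ℕ → V // ConvergesAtInfinity X o t} // Quot.mk (seqRel X o) t = η}),
    Filter.liminf
      (fun p : ℕ × ℕ => ((gromovProd X (s.1.1 p.1) (t.1.1 p.2) o : ℝ) : EReal))
      Filter.atTop

/-- The topology on the Gromov boundary, generated by the standard basic
neighborhoods `{η | (ξ|η) > M}`. -/
instance gromovBoundaryTopology {V : Type*} (X : SimpleGraph V) (o : V) :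
    TopologicalSpace (GromovBoundary X o) :=
  TopologicalSpace.generateFrom
    {U | ∃ (ξ : GromovBoundary X o) (M : ℝ), U = {η | (M : EReal) < boundaryProd X o ξ η}}

/-- A topological space has a cut point if removing some point disconnects it. -/
def HasCutPoint (Z : Type*) [TopologicalSpace Z] : Prop :=
  ∃ z : Z, ¬ IsPreconnected ({z}ᶜ : Set Z)

/-- A topological space has no cut points. -/
def NoCutPoints (Z : Type*) [TopologicalSpace Z] : Prop :=
  ∀ z : Z, IsPreconnected ({z}ᶜ : Set Z)

/-- The Bowditch boundary of `(G, 𝓟)` is connected (for every adapted generating set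
witnessing relative hyperbolicity). -/
def BoundaryConnected (G : Type u) [Group G] (𝓟 : Set (Subgroup G)) : Prop :=
  ∀ S : Finset G, Adapted G 𝓟 S → IsHyperbolicGraph (cuspedGraph 𝓟 (S : Set G)) →
    ConnectedSpace (GromovBoundary (cuspedGraph 𝓟 (S : Set G)) (Sum.inl 1))

/-- The Bowditch boundary of `(G, 𝓟)` is connected and has no cut point. -/
def BoundaryConnNoCut (G : Type u) [Group G] (𝓟 : Set (Subgroup G)) : Prop :=
  ∀ S : Finset G, Adapted G 𝓟 S → IsHyperbolicGraph (cuspedGraph 𝓟 (S : Set G)) →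
    ConnectedSpace (GromovBoundary (cuspedGraph 𝓟 (S : Set G)) (Sum.inl 1)) ∧
      NoCutPoints (GromovBoundary (cuspedGraph 𝓟 (S : Set G)) (Sum.inl 1))

/-! ### Parabolic, two-ended, elementary subgroups -/

/-- The conjugate `g P g⁻¹` of a subgroup. -/
def conjSubgroup (g : G) (P : Subgroup G) : Subgroup G :=
  Subgroup.map (MulAut.conj g).toMonoidHom P

/-- A subgroup is parabolic if it is contained in a conjugate of a member of `𝓟`. -/
def IsParabolic (𝓟 : Set (Subgroup G)) (H : Subgroup G) : Prop :=
  ∃ P ∈ 𝓟, ∃ g : G, H ≤ conjSubgroup g P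

/-- A subgroup is two-ended iff it is virtually infinite cyclic. -/
def IsTwoEnded (H : Subgroup G) : Prop :=
  ∃ K : Subgroup G, K ≤ H ∧ Infinite K ∧ IsCyclic K ∧ (K.subgroupOf H).FiniteIndex

/-- A subgroup of a relatively hyperbolic pair is elementary if it is finite,
two-ended, or parabolic. -/
def IsElementary (𝓟 : Set (Subgroup G)) (H : Subgroup G) : Prop :=
  Finite H ∨ IsTwoEnded H ∨ IsParabolic 𝓟 H

/-- A maximal parabolic subgroup. -/
def IsMaxParabolic (𝓟 : Set (Subgroup G)) (M : Subgroup G) : Prop :=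
  IsParabolic 𝓟 M ∧ ∀ M' : Subgroup G, IsParabolic 𝓟 M' → M ≤ M' → M' = M

/-- The family of subgroups entering the definition of the constant `C(G,𝓟)`:
finite non-parabolic subgroups, and subgroups contained in the intersection of two
distinct maximal parabolic subgroups. -/
def CFamily (𝓟 : Set (Subgroup G)) : Set (Subgroup G) :=
  {F | (Finite F ∧ ¬ IsParabolic 𝓟 F) ∨
    ∃ M₁ M₂ : Subgroup G, IsMaxParabolic 𝓟 M₁ ∧ IsMaxParabolic 𝓟 M₂ ∧ M₁ ≠ M₂ ∧
      F ≤ M₁ ⊓ M₂}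

/-- The constant `C(G, 𝓟) = max { |F| : F ∈ CFamily }`. -/
def CGP (G : Type u) [Group G] (𝓟 : Set (Subgroup G)) : ℕ :=
  sSup {n : ℕ | ∃ F ∈ CFamily 𝓟, Nat.card F = n}

/-- A collection `𝓟` of subgroups is `C`-almost malnormal if
`|P₁ ∩ g P₂ g⁻¹| > C` implies `P₁ = P₂` and `g ∈ P₁`.  (Cardinality `> C` is
expressed by the existence of a finite subset with more than `C` elements, which is
also correct for infinite intersections.) -/
def AlmostMalnormal (𝓟 : Set (Subgroup G)) (C : ℕ) : Prop :=
  ∀ P₁ ∈ 𝓟, ∀ P₂ ∈ 𝓟, ∀ g : G,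
    (∃ t : Finset G, (t : Set G) ⊆ ((P₁ ⊓ conjSubgroup g P₂ : Subgroup G) : Set G) ∧
      C < t.card) →
    P₁ = P₂ ∧ g ∈ P₁

/-! ### Actions on simplicial trees and splittings -/

/-- An action of `G` by automorphisms on a simplicial tree. -/
structure GTreeAction (G : Type u) [Group G] where
  /-- the vertex set -/
  V : Type u
  /-- the graph -/
  graph : SimpleGraph V
  /-- the graph is a tree -/
  isTree : graph.IsTree
  /-- the action, as a homomorphism to permutations of the vertices -/
  act : G →* Equiv.Perm V
  /-- the action preserves adjacency -/
  adj_act : ∀ (g : G) (u v : V), graph.Adj u v → graph.Adj (act g u) (act g v)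

namespace GTreeAction

variable (T : GTreeAction G)

/-- Stabilizer of a vertex. -/
def stab (v : T.V) : Subgroup G where
  carrier := {g | T.act g v = v}
  one_mem' := by simp
  mul_mem' := by
    intro a b ha hb
    simp only [Set.mem_setOf_eq, map_mul, Equiv.Perm.mul_apply] at *
    rw [hb, ha]
  inv_mem' := by
    intro a ha
    simp only [Set.mem_setOf_eq] at *
    conv_lhs => rw [← ha]
    rw [← Equiv.Perm.mul_apply, ← map_mul, inv_mul_cancel, map_one, Equiv.Perm.one_apply]

/-- Pointwise stabilizer of the pair `{u, v}`; in a tree this is the pointwise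
stabilizer of the geodesic segment from `u` to `v`. -/
def pairStab (u v : T.V) : Subgroup G := T.stab u ⊓ T.stab v

/-- The action has no inversions. -/
def NoInversions : Prop :=
  ∀ (g : G) (u v : T.V), T.graph.Adj u v → T.act g u = v → T.act g v ≠ u

/-- The action has no global fixed point (i.e. the splitting is nontrivial). -/
def NoGlobalFix : Prop := ¬ ∃ v : T.V, ∀ g : G, T.act g v = v

/-- The action is minimal: there is no proper invariant subtree. -/
def Minimal : Prop :=
  ∀ W : Set T.V, W.Nonempty → (∀ g : G, ∀ v ∈ W, T.act g v ∈ W) →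
    (T.graph.induce W).Connected → W = Set.univ

/-- All edge stabilizers belong to the class `𝒜`. -/
def EdgesIn (𝒜 : Set (Subgroup G)) : Prop :=
  ∀ u v : T.V, T.graph.Adj u v → T.pairStab u v ∈ 𝒜

/-- Each member of `𝓟` fixes a vertex. -/
def Relative (𝓟 : Set (Subgroup G)) : Prop :=
  ∀ P ∈ 𝓟, ∃ v : T.V, ∀ p ∈ P, T.act p v = v

/-- The action is `(k, C)`-acylindrical: the pointwise stabilizer of any segment of
length at least `k + 1` has cardinality at most `C`. -/
def Acyl (k C : ℕ) : Prop :=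
  ∀ u v : T.V, k + 1 ≤ T.graph.dist u v →
    ∀ t : Finset G, (t : Set G) ⊆ ((T.pairStab u v : Subgroup G) : Set G) → t.card ≤ C

/-- `T` is a (nontrivial, minimal, inversion-free) splitting of `G` over the class
`𝒜`, relative to `𝓟`. -/
def IsSplittingOverRel (𝒜 𝓟 : Set (Subgroup G)) : Prop :=
  T.NoInversions ∧ T.NoGlobalFix ∧ T.Minimal ∧ T.EdgesIn 𝒜 ∧ T.Relative 𝓟

/-- `T` is a (nontrivial, minimal, inversion-free) splitting of `G` over the class
`𝒜` (not relative to any collection). -/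
def IsSplittingOver (𝒜 : Set (Subgroup G)) : Prop :=
  T.NoInversions ∧ T.NoGlobalFix ∧ T.Minimal ∧ T.EdgesIn 𝒜

end GTreeAction

/-- `G` splits over the class `𝒜` relative to `𝓟`. -/
def SplitsOverRel (G : Type u) [Group G] (𝒜 𝓟 : Set (Subgroup G)) : Prop :=
  ∃ T : GTreeAction G, T.IsSplittingOverRel 𝒜 𝓟

/-- `G` admits a `(k, C)`-acylindrical splitting over the class `𝒜` relative
to `𝓟`. -/
def SplitsOverRelAcyl (G : Type u) [Group G] (𝒜 𝓟 : Set (Subgroup G)) (k C : ℕ) : Prop :=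
  ∃ T : GTreeAction G, T.IsSplittingOverRel 𝒜 𝓟 ∧ T.Acyl k C

/-- `G` splits over the class `𝒜` (absolute version). -/
def SplitsOver (G : Type u) [Group G] (𝒜 : Set (Subgroup G)) : Prop :=
  ∃ T : GTreeAction G, T.IsSplittingOver 𝒜

/-- A proper (i.e. nontrivial) peripheral splitting of `(G, 𝓟)`: a minimal,
inversion-free action without global fixed point on a bipartite tree, such that the
vertex stabilizers of one color are precisely the conjugates of the members of `𝓟`. -/
def HasProperPeripheralSplitting (G : Type u) [Group G] (𝓟 : Set (Subgroup G)) : Prop :=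
  ∃ T : GTreeAction G, T.NoInversions ∧ T.NoGlobalFix ∧ T.Minimal ∧
    ∃ c : T.V → Bool,
      (∀ u v : T.V, T.graph.Adj u v → c u ≠ c v) ∧
      (∀ (g : G) (v : T.V), c (T.act g v) = c v) ∧
      ({H : Subgroup G | ∃ v : T.V, c v = true ∧ H = T.stab v} =
        {H : Subgroup G | ∃ P ∈ 𝓟, ∃ g : G, H = conjSubgroup g P})

/-- `G` is one-ended relative to `𝓟`: no nontrivial splitting over a finite subgroup
relative to `𝓟`. -/
def OneEndedRel (G : Type u) [Group G] (𝓟 : Set (Subgroup G)) : Prop :=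
  ¬ SplitsOverRel G {H : Subgroup G | Finite H} 𝓟

/-! ### Ends of groups -/

/-- The Cayley graph of `H` with respect to `S`. -/
def cayleyGraph (H : Type*) [Group H] (S : Set H) : SimpleGraph H :=
  SimpleGraph.fromRel (fun x y => x⁻¹ * y ∈ S)

/-- `H` (finitely generated) has more than one end: for some finite generating set,
removing some finite set of vertices of the Cayley graph leaves at least two infinite
connected components. -/
def HasMoreThanOneEnd (H : Type*) [Group H] : Prop :=
  ∃ S : Finset H, Subgroup.closure (S : Set H) = ⊤ ∧
    ∃ K : Finset H,
      ∃ c₁ c₂ : ((cayleyGraph H (S : Set H)).induce ((K : Set H)ᶜ)).ConnectedComponent,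
        c₁ ≠ c₂ ∧ c₁.supp.Infinite ∧ c₂.supp.Infinite

/-- A group is small if it contains no non-abelian free subgroup. -/
def IsSmall (H : Subgroup G) : Prop :=
  ¬ ∃ f : FreeGroup Bool →* G, Function.Injective f ∧ ∀ x, f x ∈ H

/-- A group is slender if all its subgroups are finitely generated. -/
def IsSlender (H : Type*) [Group H] : Prop :=
  ∀ K : Subgroup H, K.FG

/-- A polycyclic group: solvable, with every subgroup finitely generated. -/
def IsPolycyclic (H : Type*) [Group H] : Prop :=
  IsSolvable H ∧ IsSlender H

/-- A virtually polycyclic group. -/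
def IsVirtuallyPolycyclic (H : Type*) [Group H] : Prop :=
  ∃ K : Subgroup H, K.FiniteIndex ∧ IsPolycyclic K

/-! ### Dehn fillings -/

/-- The data of a Dehn filling of `(G, 𝓟)`: a choice of normal subgroup
`ker P ⊴ P` for each `P ∈ 𝓟`. -/
structure FillingKernels (G : Type u) [Group G] (𝓟 : Set (Subgroup G)) where
  /-- the filling kernels -/
  ker : Subgroup G → Subgroup G
  ker_le : ∀ P ∈ 𝓟, ker P ≤ P
  ker_norm : ∀ P ∈ 𝓟, ∀ p ∈ P, ∀ k ∈ ker P, p * k * p⁻¹ ∈ ker P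

namespace FillingKernels

variable {𝓟 : Set (Subgroup G)} (D : FillingKernels G 𝓟)

/-- The kernel of the filling: the normal closure of the union of the filling
kernels. -/
def K : Subgroup G := Subgroup.normalClosure (⋃ P ∈ 𝓟, ((D.ker P : Subgroup G) : Set G))

instance : (D.K).Normal := Subgroup.normalClosure_normal

/-- The filled group `Ḡ = G / K`. -/
def Filled : Type u := G ⧸ D.K

instance : Group D.Filled := inferInstanceAs (Group (G ⧸ D.K))

/-- The quotient map `G → Ḡ`. -/
def proj : G →* D.Filled := QuotientGroup.mk' D.K

/-- The image collection `𝓟̄`: the images of the members of `𝓟`. -/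
def fillPeriph : Set (Subgroup D.Filled) :=
  (fun P : Subgroup G => P.map D.proj) '' 𝓟

/-- The collection `𝓟̄^∞` of infinite members of `𝓟̄`. -/
def fillPeriphInf : Set (Subgroup D.Filled) :=
  {Q ∈ D.fillPeriph | Infinite Q}

/-- The filling avoids the finite set `B`. -/
def Avoids (B : Finset G) : Prop :=
  ∀ P ∈ 𝓟, ∀ b ∈ B, b ∉ D.ker P

/-- The filling is `𝓜`-finite: the filling kernel has finite index in every
peripheral subgroup which is finitely generated with more than one end. -/
def MFinite : Prop :=
  ∀ P ∈ 𝓟, (Group.FG P ∧ HasMoreThanOneEnd P) → ((D.ker P).subgroupOf P).FiniteIndex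

/-- The filling kernel is normal in `P`, as a subgroup of `P`. -/
theorem subNormal (P : Subgroup G) (hP : P ∈ 𝓟) : ((D.ker P).subgroupOf P).Normal := by
  constructor
  intro n hn g
  simp only [Subgroup.mem_subgroupOf] at hn ⊢
  simpa using D.ker_norm P hP g g.2 n hn

/-- The filling is co-slender: each `P / ker P` is slender. -/
def CoSlender : Prop :=
  ∀ P : Subgroup G, ∀ hP : P ∈ 𝓟,
    letI := D.subNormal P hP
    IsSlender (↥P ⧸ (D.ker P).subgroupOf P)

end FillingKernels

/-- A property `Q` holds for all sufficiently long fillings of `(G, 𝓟)`: there is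
a finite set `B ⊆ G \ {1}` such that `Q` holds for every filling whose kernels
avoid `B`. -/
def SuffLongFillings (G : Type u) [Group G] (𝓟 : Set (Subgroup G))
    (Q : FillingKernels G 𝓟 → Prop) : Prop :=
  ∃ B : Finset G, (1 : G) ∉ B ∧ ∀ D : FillingKernels G 𝓟, D.Avoids B → Q D

/-- A sequence of fillings is stably faithful: every nontrivial element of `G`
survives in all sufficiently late fillings. -/
def StablyFaithful {G : Type u} [Group G] {𝓟 : Set (Subgroup G)}
    (φ : ℕ → FillingKernels G 𝓟) : Prop :=
  ∀ g : G, g ≠ 1 → ∃ N : ℕ, ∀ i ≥ N, (φ i).proj g ≠ 1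

/-! ### ℝ-trees -/

/-- An ℝ-tree: a geodesic metric space in which every pair of points is joined by a
unique embedded arc. -/
structure IsRTree (X : Type*) [MetricSpace X] : Prop where
  geodesic : ∀ x y : X, ∃ f : ℝ → X, f 0 = x ∧ f (dist x y) = y ∧
    ∀ s ∈ Set.Icc (0 : ℝ) (dist x y), ∀ t ∈ Set.Icc (0 : ℝ) (dist x y),
      dist (f s) (f t) = |s - t|
  unique_arc : ∀ γ₁ γ₂ : Set.Icc (0 : ℝ) 1 → X, Continuous γ₁ → Continuous γ₂ →
    Function.Injective γ₁ → Function.Injective γ₂ →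
    γ₁ ⟨0, by norm_num⟩ = γ₂ ⟨0, by norm_num⟩ →
    γ₁ ⟨1, by norm_num⟩ = γ₂ ⟨1, by norm_num⟩ →
    Set.range γ₁ = Set.range γ₂

/-- An action of `G` by isometries on an ℝ-tree. -/
structure RTreeAction (G : Type u) [Group G] where
  /-- the underlying space -/
  X : Type u
  /-- the metric -/
  [metric : MetricSpace X]
  isRTree : IsRTree X
  /-- the action -/
  act : G → X → X
  isom : ∀ g : G, Isometry (act g)
  act_one : ∀ x : X, act 1 x = x
  act_mul : ∀ (g h : G) (x : X), act (g * h) x = act g (act h x)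

namespace RTreeAction

variable (T : RTreeAction G)

/-- Stabilizer of a point. -/
def stab (x : T.X) : Subgroup G where
  carrier := {g | T.act g x = x}
  one_mem' := T.act_one x
  mul_mem' := by
    intro a b ha hb
    simp only [Set.mem_setOf_eq] at *
    rw [T.act_mul, hb, ha]
  inv_mem' := by
    intro a ha
    simp only [Set.mem_setOf_eq] at *
    conv_lhs => rw [← ha]
    rw [← T.act_mul, inv_mul_cancel, T.act_one]

/-- The action has no global fixed point. -/
def NoGlobalFix : Prop := ¬ ∃ x : T.X, ∀ g : G, T.act g x = x

/-- The action is relative to `𝓟`: each member of `𝓟` fixes a point. -/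
def Relative (𝓟 : Set (Subgroup G)) : Prop :=
  ∀ P ∈ 𝓟, ∃ x : T.X, ∀ p ∈ P, T.act p x = x

/-- Arc stabilizers (pointwise stabilizers of nondegenerate arcs, which in an ℝ-tree
coincide with the stabilizers of their pairs of endpoints) are elementary. -/
def ElementaryArcStabs (𝓟 : Set (Subgroup G)) : Prop :=
  ∀ x y : T.X, x ≠ y → IsElementary 𝓟 (T.stab x ⊓ T.stab y)

end RTreeAction

end RelHypDehn

end

/-!
Fix an adapted generating set `S` for which the cusped space `X` is `δ`-hyperbolic, and let
`K = ⌈4δ⌉ + 3`. The group `G` acts freely on `X` by depth-preserving graph automorphisms with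
finitely many orbits of vertices of each depth, and `X` is locally finite; hence the number of
elements moving a given vertex of depth `≤ K` by at most `K` is bounded uniformly. It suffices
to find such a vertex for every finite subset `t` of a member `F` of the family.

If `F` is finite, the centres of an `F`-orbit are permuted by `F` and lie within `4δ + 1` of each
other. A centre of depth `> K` would sit so deep in a horoball that every element of `F`
preserves that horoball, making `F` parabolic.

If `F ≤ g₁P₁g₁⁻¹ ⊓ g₂P₂g₂⁻¹` for distinct maximal parabolic subgroups, then `t` moves points
`x`, `y` deep enough in the two horoballs by at most `1`. A geodesic from `x` to `y` leaves the
first horoball through a Cayley vertex, and `t` moves that vertex by at most `2δ + 3`.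
-/

namespace SimpleGraph

variable {V W : Type*} {X : SimpleGraph V} {Y : SimpleGraph W}

theorem Hom.edist_le (f : X →g Y) (u v : V) : Y.edist (f u) (f v) ≤ X.edist u v := by
  rw [edist_eq_sInf (G := X)]
  exact le_sInf (Set.forall_mem_range.2 fun p => p.length_map f ▸ (p.map f).edist_le)

theorem Iso.dist_apply (e : X ≃g Y) (u v : V) : Y.dist (e u) (e v) = X.dist u v := by
  have h₁ : Y.edist (e u) (e v) ≤ X.edist u v := e.toHom.edist_le u v
  have h₂ : X.edist u v ≤ Y.edist (e u) (e v) := by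
    simpa using e.symm.toHom.edist_le (e u) (e v)
  rw [dist, dist, le_antisymm h₁ h₂]

theorem Connected.exists_dist_eq_of_le (hX : X.Connected) (u v : V) {k : ℕ}
    (hk : k ≤ X.dist u v) : ∃ m, X.dist u m = k ∧ X.dist m v = X.dist u v - k := by
  obtain ⟨p, hp⟩ := hX.exists_walk_length_eq_dist u v
  have h₁ : X.dist u (p.getVert k) ≤ k := by
    simpa [hp, hk] using dist_le (p.take k)
  have h₂ : X.dist (p.getVert k) v ≤ X.dist u v - k := by
    simpa [hp] using dist_le (p.drop k)
  have := hX.dist_triangle (u := u) (v := p.getVert k) (w := v)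
  exact ⟨p.getVert k, by omega, by omega⟩

theorem Connected.finite_setOf_dist_le (hX : X.Connected)
    (hfin : ∀ v, (X.neighborSet v).Finite) (v : V) (R : ℕ) :
    {u | X.dist v u ≤ R}.Finite := by
  induction R with
  | zero => simp [hX.dist_eq_zero_iff]
  | succ R ih =>
    refine (ih.biUnion fun u _ => (hfin u).insert u).subset fun w hw => ?_
    obtain ⟨m, hm, hmw⟩ := hX.exists_dist_eq_of_le v w (Nat.sub_le (X.dist v w) 1)
    have hw : X.dist v w ≤ R + 1 := hw
    refine Set.mem_biUnion (x := m) (show X.dist v m ≤ R by omega) ?_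
    rcases Nat.le_one_iff_eq_zero_or_eq_one.mp (show X.dist m w ≤ 1 by omega) with h | h
    · exact Or.inl (hX.dist_eq_zero_iff.mp h).symm
    · exact Or.inr (dist_eq_one_iff_adj.mp h)

end SimpleGraph

namespace RelHypDehn

variable {G : Type u} [Group G]

section WordBall

variable {T T' : Set G} {k k' : ℕ} {g : G}

theorem wordBall_mono (hT : T ⊆ T') (hk : k ≤ k') : wordBall T k ⊆ wordBall T' k' := by
  rintro g ⟨l, hl, he, rfl⟩
  exact ⟨l, hl.trans hk, fun a ha => (he a ha).imp (@hT _) (@hT _), rfl⟩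

theorem one_mem_wordBall : (1 : G) ∈ wordBall T k :=
  ⟨[], by simp, by simp, rfl⟩

theorem mem_wordBall_of_mem (hg : g ∈ T) (hk : 1 ≤ k) : g ∈ wordBall T k :=
  ⟨[g], hk, by simp [hg], by simp⟩

theorem inv_mem_wordBall (hg : g ∈ wordBall T k) : g⁻¹ ∈ wordBall T k := by
  obtain ⟨l, hl, he, rfl⟩ := hg
  refine ⟨(l.map (·⁻¹)).reverse, by simpa using hl, ?_, (List.prod_inv_reverse l).symm⟩
  simp only [List.mem_reverse, List.mem_map]
  rintro _ ⟨a, ha, rfl⟩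
  simpa [or_comm] using he a ha

theorem wordBall_succ_subset : wordBall T (k + 1) ⊆ insert 1 ((T ∪ T⁻¹) * wordBall T k) := by
  rintro g ⟨_ | ⟨a, l⟩, hl, he, rfl⟩
  · simp
  · refine Or.inr (Set.mul_mem_mul ?_
      ⟨l, by simpa using hl, fun b hb => he b (by simp [hb]), rfl⟩)
    simpa using he a (by simp)

theorem wordBall_finite (hT : T.Finite) (k : ℕ) : (wordBall T k).Finite := by
  induction k with
  | zero =>
    refine (Set.finite_singleton 1).subset ?_
    rintro g ⟨l, hl, -, rfl⟩
    simp [List.length_eq_zero_iff.mp (Nat.le_zero.mp hl)]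
  | succ k ih => exact (((hT.union hT.inv).mul ih).insert 1).subset wordBall_succ_subset

theorem wordBall_subset_closure : wordBall T k ⊆ Subgroup.closure T := by
  rintro g ⟨l, -, he, rfl⟩
  refine list_prod_mem fun a ha => ?_
  rcases he a ha with h | h
  · exact Subgroup.subset_closure h
  · simpa using inv_mem (Subgroup.subset_closure h)

theorem exists_mem_wordBall_of_mem_closure (hg : g ∈ Subgroup.closure T) :
    ∃ k, g ∈ wordBall T k := by
  rw [← Subgroup.mem_toSubmonoid, Subgroup.closure_toSubmonoid] at hg
  obtain ⟨l, hl, rfl⟩ := Submonoid.exists_list_of_mem_closure hg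
  exact ⟨l.length, l, le_rfl, fun a ha => by simpa using hl a ha, rfl⟩

theorem exists_subset_wordBall_of_subset_closure {s : Finset G}
    (hs : (s : Set G) ⊆ Subgroup.closure T) : ∃ k, (s : Set G) ⊆ wordBall T k :=
  (monotone_nat_of_le_succ fun k => wordBall_mono subset_rfl k.le_succ).directed_le
    |>.exists_mem_subset_of_finset_subset_biUnion
      fun _ hg => Set.mem_iUnion.2 (exists_mem_wordBall_of_mem_closure (hs hg))

end WordBall

section Parabolic

variable {𝓟 : Set (Subgroup G)} {P : Subgroup G} {g₁ g₂ x : G}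

theorem mem_conjSubgroup : x ∈ conjSubgroup g₁ P ↔ g₁⁻¹ * x * g₁ ∈ P := by
  refine ⟨?_, fun h => ⟨_, h, ?_⟩⟩
  · rintro ⟨p, hp, rfl⟩
    simpa [MulAut.conj_apply, mul_assoc] using hp
  · simp [MulAut.conj_apply, mul_assoc]

theorem conjSubgroup_eq_of_inv_mul_mem (h : g₁⁻¹ * g₂ ∈ P) :
    conjSubgroup g₁ P = conjSubgroup g₂ P := by
  ext x
  have key : g₂⁻¹ * x * g₂ = (g₁⁻¹ * g₂)⁻¹ * (g₁⁻¹ * x * g₁) * (g₁⁻¹ * g₂) := by group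
  rw [mem_conjSubgroup, mem_conjSubgroup, key, Subgroup.mul_mem_cancel_right _ h,
    Subgroup.mul_mem_cancel_left _ (inv_mem h)]

theorem IsMaxParabolic.exists_eq_conjSubgroup {M : Subgroup G} (hM : IsMaxParabolic 𝓟 M) :
    ∃ P ∈ 𝓟, ∃ g, M = conjSubgroup g P := by
  obtain ⟨⟨P, hP, g, hle⟩, hmax⟩ := hM
  exact ⟨P, hP, g, (hmax _ ⟨P, hP, g, le_rfl⟩ hle).symm⟩

end Parabolic

section Hyperbolic

variable {V : Type*} {X : SimpleGraph V} {δ : ℝ}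

def IsDeltaHyperbolic (X : SimpleGraph V) (δ : ℝ) : Prop :=
  ∀ x y z w : V, min (gromovProd X x z w) (gromovProd X z y w) - δ ≤ gromovProd X x y w

def IsCentre (X : SimpleGraph V) (Y : Finset V) (c : V) : Prop :=
  ∀ m, Y.sup (X.dist c) ≤ Y.sup (X.dist m)

theorem exists_isCentre (X : SimpleGraph V) [Nonempty V] (Y : Finset V) :
    ∃ c, IsCentre X Y c :=
  ⟨Function.argmin fun v => Y.sup (X.dist v),
    fun m => Function.argmin_le (fun v => Y.sup (X.dist v)) m⟩

theorem IsCentre.dist_le (hX : X.Connected) (hδ : IsDeltaHyperbolic X δ) {Y : Finset V}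
    (hY : Y.Nonempty) {x y : V} (hx : IsCentre X Y x) (hy : IsCentre X Y y) :
    (X.dist x y : ℝ) ≤ 4 * δ + 1 := by
  obtain ⟨m, hxm, hmy⟩ := hX.exists_dist_eq_of_le x y (Nat.div_le_self (X.dist x y) 2)
  obtain ⟨z, hz, hmz⟩ := Y.exists_mem_eq_sup hY (X.dist m)
  have hxz : X.dist x z ≤ X.dist m z := (Y.le_sup hz).trans ((hx m).trans hmz.le)
  have hyz : X.dist y z ≤ X.dist m z := (Y.le_sup hz).trans ((hy m).trans hmz.le)
  have h₁ : (X.dist x m : ℝ) + X.dist m y = X.dist x y := by exact_mod_cast (by omega)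
  have h₂ : (X.dist x m : ℝ) ≤ X.dist m y := by exact_mod_cast (by omega)
  have h₃ : (X.dist x y : ℝ) ≤ 2 * X.dist x m + 1 := by exact_mod_cast (by omega)
  have hxz' : (X.dist x z : ℝ) ≤ X.dist m z := by exact_mod_cast hxz
  have hyz' : (X.dist y z : ℝ) ≤ X.dist m z := by exact_mod_cast hyz
  have h4 := hδ x y z m
  simp only [gromovProd, SimpleGraph.dist_comm (u := y) (v := m),
    SimpleGraph.dist_comm (u := z) (v := m), SimpleGraph.dist_comm (u := z) (v := y)] at h4
  rcases min_le_iff.mp (show _ ≤ δ by linarith) with h | h <;> linarith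

theorem dist_apply_le_of_dist_add_dist_eq (hX : X.Connected) (hδ : IsDeltaHyperbolic X δ)
    {φ : V → V} (hφ : ∀ u v, X.dist (φ u) (φ v) = X.dist u v) {x y m : V}
    (hm : X.dist x m + X.dist m y = X.dist x y)
    (hx : X.dist x (φ x) ≤ 1) (hy : X.dist y (φ y) ≤ 1) :
    (X.dist m (φ m) : ℝ) ≤ 2 * δ + 3 := by
  have t₁ : (X.dist (φ x) m : ℝ) ≤ X.dist x (φ x) + X.dist x m := by
    rw [SimpleGraph.dist_comm (u := x)]; exact_mod_cast hX.dist_triangle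
  have t₂ : (X.dist (φ y) m : ℝ) ≤ X.dist y (φ y) + X.dist m y := by
    rw [SimpleGraph.dist_comm (u := y), SimpleGraph.dist_comm (u := m)]
    exact_mod_cast hX.dist_triangle
  have t₃ : (X.dist x m : ℝ) ≤ X.dist x (φ x) + X.dist (φ x) m := by
    exact_mod_cast hX.dist_triangle
  have t₄ : (X.dist m y : ℝ) ≤ X.dist (φ y) m + X.dist y (φ y) := by
    rw [SimpleGraph.dist_comm (u := φ y), SimpleGraph.dist_comm (u := y)]
    exact_mod_cast hX.dist_triangle
  have hm' : (X.dist x m : ℝ) + X.dist m y = X.dist x y := by exact_mod_cast hm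
  have hx' : (X.dist x (φ x) : ℝ) ≤ 1 := by exact_mod_cast hx
  have hy' : (X.dist y (φ y) : ℝ) ≤ 1 := by exact_mod_cast hy
  have h4 := hδ (φ x) (φ y) (φ m) m
  simp only [gromovProd, hφ, SimpleGraph.dist_comm (u := φ m) (v := m)] at h4
  rcases min_le_iff.mp (show _ ≤ 1 + δ by linarith) with h | h <;> linarith

theorem exists_dist_smul_le_of_finite {H : Type*} [Group H] [MulAction H V]
    (hX : X.Connected) (hδ : IsDeltaHyperbolic X δ)
    (hiso : ∀ (g : H) (u v : V), X.dist (g • u) (g • v) = X.dist u v)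
    (F : Subgroup H) [Finite F] : ∃ c, ∀ g ∈ F, (X.dist c (g • c) : ℝ) ≤ 4 * δ + 1 := by
  classical
  have : Nonempty V := hX.nonempty
  set v₀ := Classical.arbitrary V
  set Y := (Set.finite_range fun f : F => (f : H) • v₀).toFinset
  have hY : Y.Nonempty := ⟨v₀, by simpa [Y] using ⟨1, F.one_mem, one_smul H v₀⟩⟩
  obtain ⟨c, hc⟩ := exists_isCentre X Y
  refine ⟨c, fun g hg => hc.dist_le hX hδ hY fun m => le_trans ?_ (hc m)⟩
  refine Finset.sup_le fun z hz => ?_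
  have hz' : g⁻¹ • z ∈ Y := by
    obtain ⟨f, rfl⟩ : ∃ f : F, (f : H) • v₀ = z := by simpa [Y] using hz
    simpa [Y, smul_smul] using ⟨g⁻¹ * f, mul_mem (inv_mem hg) f.2, rfl⟩
  calc X.dist (g • c) z = X.dist c (g⁻¹ • z) := by rw [← hiso g⁻¹, inv_smul_smul]
    _ ≤ Y.sup (X.dist c) := Y.le_sup hz'

end Hyperbolic

section CuspedSpace

variable {𝓟 : Set (Subgroup G)} {S : Set G}

instance : MulAction G (CuspedVertex G 𝓟) where
  smul g
    | .inl x => .inl (g * x)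
    | .inr (P, x, n) => .inr (P, g * x, n)
  one_smul v := by rcases v with x | ⟨P, x, n⟩ <;> simp [HSMul.hSMul]
  mul_smul g h v := by rcases v with x | ⟨P, x, n⟩ <;> simp [HSMul.hSMul, mul_assoc]

@[simp]
theorem smul_inl (g x : G) : g • (Sum.inl x : CuspedVertex G 𝓟) = .inl (g * x) := rfl

@[simp]
theorem smul_inr (g x : G) (P : 𝓟) (n : ℕ) :
    g • (Sum.inr (P, x, n) : CuspedVertex G 𝓟) = .inr (P, g * x, n) := rfl

def depth : CuspedVertex G 𝓟 → ℕ
  | .inl _ => 0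
  | .inr (_, _, n) => n + 1

def cayleyPoint : CuspedVertex G 𝓟 → G
  | .inl x => x
  | .inr (_, x, _) => x

@[simp]
theorem depth_smul (g : G) (v : CuspedVertex G 𝓟) : depth (g • v) = depth v := by
  rcases v with x | ⟨P, x, n⟩ <;> rfl

@[simp]
theorem cayleyPoint_smul (g : G) (v : CuspedVertex G 𝓟) :
    cayleyPoint (g • v) = g * cayleyPoint v := by
  rcases v with x | ⟨P, x, n⟩ <;> rfl

theorem smul_left_injective_cuspedVertex (v : CuspedVertex G 𝓟) :
    Function.Injective (· • v : G → CuspedVertex G 𝓟) :=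
  fun g h hgh => by simpa using congrArg cayleyPoint hgh

theorem cuspedRel_smul_iff {g : G} {u v : CuspedVertex G 𝓟} :
    cuspedRel 𝓟 S (g • u) (g • v) ↔ cuspedRel 𝓟 S u v := by
  rcases u with x | ⟨P, x, n⟩ <;> rcases v with y | ⟨Q, y, m⟩ <;>
    simp [cuspedRel, mul_assoc]

def smulIso (g : G) : cuspedGraph 𝓟 S ≃g cuspedGraph 𝓟 S where
  toEquiv := MulAction.toPerm g
  map_rel_iff' := by simp [cuspedGraph, cuspedRel_smul_iff]

theorem dist_smul_smul (g : G) (u v : CuspedVertex G 𝓟) :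
    (cuspedGraph 𝓟 S).dist (g • u) (g • v) = (cuspedGraph 𝓟 S).dist u v :=
  (smulIso g).dist_apply u v

theorem reachable_smul {u v : CuspedVertex G 𝓟} (h : (cuspedGraph 𝓟 S).Reachable u v)
    (g : G) : (cuspedGraph 𝓟 S).Reachable (g • u) (g • v) :=
  h.map (smulIso g).toHom

theorem depth_le_and_inv_mul_mem_wordBall_of_cuspedRel {u v : CuspedVertex G 𝓟}
    (h : cuspedRel 𝓟 S u v) :
    depth u ≤ depth v + 1 ∧ depth v ≤ depth u + 1 ∧
      (cayleyPoint u)⁻¹ * cayleyPoint v ∈ wordBall S (2 ^ min (depth u) (depth v)) := by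
  rcases u with x | ⟨P, x, n⟩ <;> rcases v with y | ⟨Q, y, m⟩ <;>
    simp only [cuspedRel] at h <;> simp only [depth, cayleyPoint]
  · exact ⟨by omega, by omega, mem_wordBall_of_mem h le_rfl⟩
  · obtain ⟨rfl, rfl⟩ := h
    simpa using one_mem_wordBall
  · obtain ⟨rfl, rfl⟩ := h
    simpa using one_mem_wordBall
  · obtain ⟨-, ⟨rfl, rfl⟩ | ⟨rfl, hw⟩⟩ := h
    · simpa using one_mem_wordBall
    · simpa using wordBall_mono Set.inter_subset_left le_rfl hw

theorem depth_le_and_inv_mul_mem_wordBall_of_adj {u v : CuspedVertex G 𝓟}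
    (h : (cuspedGraph 𝓟 S).Adj u v) :
    depth u ≤ depth v + 1 ∧ depth v ≤ depth u + 1 ∧
      (cayleyPoint u)⁻¹ * cayleyPoint v ∈ wordBall S (2 ^ min (depth u) (depth v)) := by
  rcases ((SimpleGraph.fromRel_adj _ _ _).1 h).2 with h | h
  · exact depth_le_and_inv_mul_mem_wordBall_of_cuspedRel h
  · obtain ⟨h₁, h₂, h₃⟩ := depth_le_and_inv_mul_mem_wordBall_of_cuspedRel h
    exact ⟨h₂, h₁, by simpa [min_comm] using inv_mem_wordBall h₃⟩

theorem finite_setOf_depth_le_cayleyPoint_mem (h𝓟 : 𝓟.Finite) (D : ℕ) {A : Set G}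
    (hA : A.Finite) : {v : CuspedVertex G 𝓟 | depth v ≤ D ∧ cayleyPoint v ∈ A}.Finite := by
  have := h𝓟.to_subtype
  refine ((hA.image Sum.inl).union
    ((Set.finite_univ.prod (hA.prod (Set.finite_Iic D))).image Sum.inr)).subset ?_
  rintro (x | ⟨P, x, n⟩) ⟨hD, hx⟩
  · exact Or.inl ⟨x, hx, rfl⟩
  · exact Or.inr ⟨(P, x, n), ⟨trivial, hx, by simp only [depth] at hD; simp; omega⟩, rfl⟩

theorem neighborSet_finite (h𝓟 : 𝓟.Finite) (hS : S.Finite) (u : CuspedVertex G 𝓟) :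
    ((cuspedGraph 𝓟 S).neighborSet u).Finite := by
  refine (finite_setOf_depth_le_cayleyPoint_mem h𝓟 (depth u + 1)
    ((wordBall_finite hS (2 ^ depth u)).smul_set (a := cayleyPoint u))).subset fun v hv => ?_
  obtain ⟨-, hd, hw⟩ := depth_le_and_inv_mul_mem_wordBall_of_adj hv
  refine ⟨hd, Set.mem_smul_set_iff_inv_smul_mem.2 ?_⟩
  exact wordBall_mono subset_rfl (Nat.pow_le_pow_right two_pos (min_le_left _ _)) hw

theorem reachable_inl_one_inl (hS : Subgroup.closure S = ⊤) (x : G) :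
    (cuspedGraph 𝓟 S).Reachable (.inl 1) (.inl x) := by
  induction (hS ▸ Subgroup.mem_top x : x ∈ Subgroup.closure S)
    using Subgroup.closure_induction with
  | mem s hs =>
    by_cases h : (1 : G) = s
    · rw [← h]
    · exact SimpleGraph.Adj.reachable ((SimpleGraph.fromRel_adj _ _ _).2
        ⟨by simpa using h, Or.inl (by simpa [cuspedRel] using hs)⟩)
  | one => rfl
  | mul x y _ _ hx hy => exact hx.trans (by simpa using reachable_smul hy x)
  | inv x _ hx => exact SimpleGraph.Reachable.symm (by simpa using reachable_smul hx x⁻¹)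

theorem reachable_inr_inl (P : 𝓟) (x : G) (n : ℕ) :
    (cuspedGraph 𝓟 S).Reachable (.inr (P, x, n)) (.inl x) := by
  induction n with
  | zero => exact SimpleGraph.Adj.reachable ((SimpleGraph.fromRel_adj _ _ _).2
      ⟨by simp, Or.inl ⟨rfl, rfl⟩⟩)
  | succ n ih => exact (SimpleGraph.Adj.reachable ((SimpleGraph.fromRel_adj _ _ _).2
      ⟨by simp, Or.inr ⟨rfl, Or.inl ⟨rfl, rfl⟩⟩⟩)).trans ih

theorem cuspedGraph_connected (hS : Subgroup.closure S = ⊤) : (cuspedGraph 𝓟 S).Connected := by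
  refine (SimpleGraph.connected_iff_exists_forall_reachable _).2 ⟨.inl 1, ?_⟩
  rintro (x | ⟨P, x, n⟩)
  · exact reachable_inl_one_inl hS x
  · exact (reachable_inl_one_inl hS x).trans (reachable_inr_inl P x n).symm

theorem depth_le_depth_add_length {u v : CuspedVertex G 𝓟}
    (p : (cuspedGraph 𝓟 S).Walk u v) : depth u ≤ depth v + p.length := by
  induction p with
  | nil => simp
  | cons h p ih =>
    have := (depth_le_and_inv_mul_mem_wordBall_of_adj h).1
    simp only [SimpleGraph.Walk.length_cons]
    omega

theorem depth_le_depth_add_dist (hX : (cuspedGraph 𝓟 S).Connected) (u v : CuspedVertex G 𝓟) :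
    depth u ≤ depth v + (cuspedGraph 𝓟 S).dist u v := by
  obtain ⟨p, hp⟩ := hX.exists_walk_length_eq_dist u v
  exact hp ▸ depth_le_depth_add_length p

theorem exists_card_le_of_forall_dist_smul_le (h𝓟 : 𝓟.Finite) (hS : S.Finite)
    (hX : (cuspedGraph 𝓟 S).Connected) (K : ℕ) :
    ∃ N, ∀ (c : CuspedVertex G 𝓟) (t : Finset G), depth c ≤ K →
      (∀ g ∈ t, (cuspedGraph 𝓟 S).dist c (g • c) ≤ K) → t.card ≤ N := by
  have hball := hX.finite_setOf_dist_le (neighborSet_finite h𝓟 hS)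
  obtain ⟨N, hN⟩ := (finite_setOf_depth_le_cayleyPoint_mem h𝓟 K (Set.finite_singleton 1)).image
    (fun v => {u | (cuspedGraph 𝓟 S).dist v u ≤ K}.ncard) |>.bddAbove
  refine ⟨N, fun c t hc ht => ?_⟩
  -- `x⁻¹ • c` is one of finitely many representatives, and `g ↦ x⁻¹ g • c` embeds `t` in its ball
  set x := cayleyPoint c
  have hc₀ : x⁻¹ • c ∈ {v | depth v ≤ K ∧ cayleyPoint v ∈ ({1} : Set G)} := by
    simpa [x] using hc
  calc t.card = (t : Set G).ncard := (Set.ncard_coe_finset t).symm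
    _ ≤ {u | (cuspedGraph 𝓟 S).dist (x⁻¹ • c) u ≤ K}.ncard := by
      refine Set.ncard_le_ncard_of_injOn (fun g => (x⁻¹ * g) • c) (fun g hg => ?_)
        (fun g₁ _ g₂ _ h => ?_) (hball _ K)
      · simpa [mul_smul, dist_smul_smul] using ht g hg
      · simpa using smul_left_injective_cuspedVertex c h
    _ ≤ N := hN ⟨_, hc₀, rfl⟩

/-- The horoball over the coset `c P`. -/
def horoball (P : 𝓟) (c : G) : Set (CuspedVertex G 𝓟)
  | .inl _ => False
  | .inr (Q, y, _) => Q = P ∧ c⁻¹ * y ∈ (P : Subgroup G)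

theorem inr_mem_horoball (P : 𝓟) (c : G) (n : ℕ) :
    (.inr (P, c, n) : CuspedVertex G 𝓟) ∈ horoball P c :=
  ⟨rfl, by simp⟩

theorem inv_mul_mem_of_cuspedRel_inr_inr {P Q : 𝓟} {x y : G} {n m : ℕ}
    (h : cuspedRel 𝓟 S (.inr (P, x, n)) (.inr (Q, y, m))) :
    P = Q ∧ x⁻¹ * y ∈ (P : Subgroup G) := by
  obtain ⟨rfl, ⟨rfl, -⟩ | ⟨-, hw⟩⟩ := h
  · simp
  · exact ⟨rfl, (Subgroup.closure_le _).2 Set.inter_subset_right (wordBall_subset_closure hw)⟩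

theorem mem_horoball_of_adj {P Q : 𝓟} {c y : G} {m : ℕ} {u : CuspedVertex G 𝓟}
    (h : (cuspedGraph 𝓟 S).Adj u (.inr (Q, y, m))) (hu : u ∈ horoball P c) :
    .inr (Q, y, m) ∈ horoball P c := by
  rcases u with x | ⟨P', x, n⟩
  · exact hu.elim
  obtain ⟨rfl, hx⟩ := hu
  rcases ((SimpleGraph.fromRel_adj _ _ _).1 h).2 with h | h
  · obtain ⟨rfl, hxy⟩ := inv_mul_mem_of_cuspedRel_inr_inr h
    exact ⟨rfl, by simpa [mul_assoc] using mul_mem hx hxy⟩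
  · obtain ⟨rfl, hyx⟩ := inv_mul_mem_of_cuspedRel_inr_inr h
    exact ⟨rfl, by simpa [mul_assoc] using mul_mem hx (inv_mem hyx)⟩

theorem exists_inl_mem_support_of_mem_horoball {P : 𝓟} {c : G} {u v : CuspedVertex G 𝓟}
    (p : (cuspedGraph 𝓟 S).Walk u v) (hu : u ∈ horoball P c) (hv : v ∉ horoball P c) :
    ∃ z, .inl z ∈ p.support := by
  induction p with
  | nil => exact absurd hu hv
  | @cons _ w _ h p ih =>
    rcases w with z | ⟨Q, y, m⟩
    · exact ⟨z, by simp⟩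
    · obtain ⟨z, hz⟩ := ih (mem_horoball_of_adj h hu) hv
      exact ⟨z, List.mem_cons_of_mem _ hz⟩

theorem exists_dist_add_dist_eq_of_mem_horoball (hX : (cuspedGraph 𝓟 S).Connected) {P : 𝓟}
    {c : G} {u v : CuspedVertex G 𝓟} (hu : u ∈ horoball P c) (hv : v ∉ horoball P c) :
    ∃ z, (cuspedGraph 𝓟 S).dist u (.inl z) + (cuspedGraph 𝓟 S).dist (.inl z) v =
      (cuspedGraph 𝓟 S).dist u v := by
  classical
  obtain ⟨p, hp⟩ := hX.exists_walk_length_eq_dist u v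
  obtain ⟨z, hz⟩ := exists_inl_mem_support_of_mem_horoball p hu hv
  have hlen := congrArg SimpleGraph.Walk.length (p.take_spec hz)
  rw [SimpleGraph.Walk.length_append] at hlen
  have h₁ := SimpleGraph.dist_le (p.takeUntil _ hz)
  have h₂ := SimpleGraph.dist_le (p.dropUntil _ hz)
  have h₃ := hX.dist_triangle (u := u) (v := .inl z) (w := v)
  exact ⟨z, by omega⟩

theorem mem_conjSubgroup_of_dist_smul_le (hX : (cuspedGraph 𝓟 S).Connected) {P : 𝓟}
    {x g : G} {n : ℕ} (h : (cuspedGraph 𝓟 S).dist (.inr (P, x, n)) (g • .inr (P, x, n)) ≤ n) :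
    g ∈ conjSubgroup x P := by
  by_contra hg
  have hv : g • .inr (P, x, n) ∉ horoball P x := fun ⟨_, h'⟩ =>
    hg (mem_conjSubgroup.2 (by simpa [mul_assoc] using h'))
  obtain ⟨z, hz⟩ := exists_dist_add_dist_eq_of_mem_horoball hX (inr_mem_horoball P x n) hv
  have := depth_le_depth_add_dist hX (.inr (P, x, n)) (.inl z)
  simp only [depth] at this
  omega

theorem dist_smul_inr_le_one {P : 𝓟} {x f : G} {n : ℕ}
    (hf : x⁻¹ * f * x ∈ wordBall (S ∩ P) (2 ^ (n + 1))) :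
    (cuspedGraph 𝓟 S).dist (.inr (P, x, n)) (f • .inr (P, x, n)) ≤ 1 := by
  by_cases heq : (.inr (P, x, n) : CuspedVertex G 𝓟) = f • .inr (P, x, n)
  · simp [← heq]
  · refine (SimpleGraph.dist_eq_one_iff_adj.2 ((SimpleGraph.fromRel_adj _ _ _).2
      ⟨heq, Or.inl ⟨rfl, Or.inr ⟨rfl, ?_⟩⟩⟩)).le
    simpa [mul_assoc] using hf

theorem exists_forall_dist_smul_inr_le_one {P : 𝓟} (hP : Subgroup.closure (S ∩ P) = P)
    {x : G} {t : Finset G} (ht : ∀ f ∈ t, f ∈ conjSubgroup x P) :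
    ∃ n₀, ∀ n ≥ n₀, ∀ f ∈ t,
      (cuspedGraph 𝓟 S).dist (.inr (P, x, n)) (f • .inr (P, x, n)) ≤ 1 := by
  classical
  obtain ⟨k, hk⟩ := exists_subset_wordBall_of_subset_closure (T := S ∩ P)
    (s := t.image fun f => x⁻¹ * f * x) (by
      simpa [hP, Set.subset_def] using fun f hf => mem_conjSubgroup.1 (ht f hf))
  refine ⟨k, fun n hn f hf => dist_smul_inr_le_one (wordBall_mono subset_rfl ?_
    (hk (Finset.mem_image_of_mem _ hf)))⟩
  exact hn.trans (n.lt_succ_self.trans Nat.lt_two_pow_self).le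

variable {δ : ℝ} {K : ℕ}

theorem exists_depth_le_dist_smul_le_of_not_isParabolic (hX : (cuspedGraph 𝓟 S).Connected)
    (hδ : IsDeltaHyperbolic (cuspedGraph 𝓟 S) δ) (hK : 4 * δ + 1 ≤ K) (F : Subgroup G)
    [Finite F] (hF : ¬ IsParabolic 𝓟 F) :
    ∃ c : CuspedVertex G 𝓟, depth c ≤ K ∧ ∀ g ∈ F, (cuspedGraph 𝓟 S).dist c (g • c) ≤ K := by
  obtain ⟨c, hc⟩ := exists_dist_smul_le_of_finite hX hδ dist_smul_smul F
  have hcK : ∀ g ∈ F, (cuspedGraph 𝓟 S).dist c (g • c) ≤ K := fun g hg => by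
    exact_mod_cast (hc g hg).trans hK
  refine ⟨c, ?_, hcK⟩
  rcases c with x | ⟨P, x, n⟩
  · simp [depth]
  · by_contra hn
    simp only [depth, not_le] at hn
    exact hF ⟨P, P.2, x, fun g hg =>
      mem_conjSubgroup_of_dist_smul_le hX ((hcK g hg).trans (by omega))⟩

theorem exists_inl_dist_smul_le_of_le_inf_isMaxParabolic (hX : (cuspedGraph 𝓟 S).Connected)
    (hδ : IsDeltaHyperbolic (cuspedGraph 𝓟 S) δ) (hK : 2 * δ + 3 ≤ K)
    (hSP : ∀ P ∈ 𝓟, Subgroup.closure (S ∩ P) = P) {M₁ M₂ : Subgroup G}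
    (h₁ : IsMaxParabolic 𝓟 M₁) (h₂ : IsMaxParabolic 𝓟 M₂) (hne : M₁ ≠ M₂) {t : Finset G}
    (ht : ∀ f ∈ t, f ∈ M₁ ⊓ M₂) :
    ∃ z : G, ∀ f ∈ t, (cuspedGraph 𝓟 S).dist (.inl z) (f • .inl z) ≤ K := by
  obtain ⟨P₁, hP₁, g₁, rfl⟩ := h₁.exists_eq_conjSubgroup
  obtain ⟨P₂, hP₂, g₂, rfl⟩ := h₂.exists_eq_conjSubgroup
  obtain ⟨n₁, hn₁⟩ := exists_forall_dist_smul_inr_le_one (P := ⟨P₁, hP₁⟩) (hSP P₁ hP₁)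
    fun f hf => (ht f hf).1
  obtain ⟨n₂, hn₂⟩ := exists_forall_dist_smul_inr_le_one (P := ⟨P₂, hP₂⟩) (hSP P₂ hP₂)
    fun f hf => (ht f hf).2
  have hy : .inr (⟨P₂, hP₂⟩, g₂, max n₁ n₂) ∉ horoball ⟨P₁, hP₁⟩ g₁ := by
    rintro ⟨hP, hg⟩
    obtain rfl : P₂ = P₁ := congrArg Subtype.val hP
    exact hne (conjSubgroup_eq_of_inv_mul_mem hg)
  obtain ⟨z, hz⟩ := exists_dist_add_dist_eq_of_mem_horoball hX
    (inr_mem_horoball _ _ (max n₁ n₂)) hy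
  refine ⟨z, fun f hf => ?_⟩
  have := dist_apply_le_of_dist_add_dist_eq hX hδ (dist_smul_smul f) hz
    (hn₁ _ (le_max_left _ _) f hf) (hn₂ _ (le_max_right _ _) f hf)
  exact_mod_cast this.trans hK

end CuspedSpace

end RelHypDehn

open RelHypDehn in
/-- **Lemma 2.16** ([GM, Lemma 4.4]).  If `(G, 𝓟)` is relatively hyperbolic then
`C(G, 𝓟) < ∞`: there is a finite uniform bound on the cardinalities of all
subgroups of `G` which are finite non-parabolic or contained in the intersection
of two distinct maximal parabolic subgroups. -/
theorem CGP_finite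
    {G : Type u} [Group G] (𝓟 : Set (Subgroup G))
    (hRH : IsRelHyp G 𝓟) :
    ∃ N : ℕ, ∀ F ∈ CFamily 𝓟, ∀ t : Finset G, (t : Set G) ⊆ (F : Set G) → t.card ≤ N := by
  obtain ⟨h𝓟, -, S, ⟨hS, hSP⟩, δ, hδ0, hδ⟩ := hRH
  have hX := cuspedGraph_connected (𝓟 := 𝓟) hS
  set K := ⌈4 * δ⌉₊ + 3
  have hK : 4 * δ + 3 ≤ K := by
    have := Nat.le_ceil (4 * δ)
    push_cast [K]
    linarith
  obtain ⟨N, hN⟩ := exists_card_le_of_forall_dist_smul_le h𝓟 S.finite_toSet hX K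
  refine ⟨N, fun F hF t ht => ?_⟩
  rcases hF with ⟨hFin, hFnp⟩ | ⟨M₁, M₂, h₁, h₂, hne, hle⟩
  · obtain ⟨c, hc, hmove⟩ :=
      exists_depth_le_dist_smul_le_of_not_isParabolic hX hδ (by linarith) F hFnp
    exact hN c t hc fun g hg => hmove g (ht hg)
  · obtain ⟨z, hz⟩ := exists_inl_dist_smul_le_of_le_inf_isMaxParabolic hX hδ (by linarith) hSP
      h₁ h₂ hne fun f hf => hle (ht hf)
    exact hN (.inl z) t (by simp [depth]) hz
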